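/- High-probability bound on the noise–covariate correlation: fix δ ∈ (0,1). There exists n0 such that for all n ≥ n0, with probability at least 1 − δ/4 over i.i.d. samples x1,…,xn ~ N(0,Σ) on ℝ^d and independent i.i.d. z1,…,zn ~ N(0,Ω) on ℝ^p, one has ‖(1/n)·∑_{i=1}^n z_i x_iᵀ‖_op ≤ K5·√(log(4n/δ))/√n, where K5 = 2√2·‖Ω‖_op^{1/2}·‖Σ‖_op. -/

import Mathlib

open MeasureTheory Matrix Real
open scoped BigOperators

noncomputable section

def vnorm {ι : Type*} [Fintype ι] (v : ι → ℝ) : ℝ := Real.sqrt (∑ i, (v i) ^ 2)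

def frob {ι κ : Type*} [Fintype ι] [Fintype κ] (A : Matrix ι κ ℝ) : ℝ :=
  Real.sqrt (∑ i, ∑ j, (A i j) ^ 2)

def opN {ι κ : Type*} [Fintype ι] [Fintype κ] (A : Matrix ι κ ℝ) : ℝ :=
  sSup {r | ∃ x : κ → ℝ, vnorm x ≤ 1 ∧ r = vnorm (A.mulVec x)}

def svalMax {ι κ : Type*} [Fintype ι] [Fintype κ] (A : Matrix ι κ ℝ) : ℝ :=
  sSup {r | ∃ x : κ → ℝ, vnorm x = 1 ∧ r = vnorm (A.mulVec x)}

def svalMin {ι κ : Type*} [Fintype ι] [Fintype κ] (A : Matrix ι κ ℝ) : ℝ :=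
  sInf {r | ∃ x : κ → ℝ, vnorm x = 1 ∧ r = vnorm (A.mulVec x)}

def msqrt {ι : Type*} [Fintype ι] [DecidableEq ι] (S : Matrix ι ι ℝ) : Matrix ι ι ℝ :=
  @dite _ S.PosSemidef (Classical.dec _) (fun h => h.1.eigenvectorUnitary.1 * diagonal ((RCLike.ofReal : ℝ → ℝ) ∘ (√·) ∘ h.1.eigenvalues)
    * (star h.1.eigenvectorUnitary : Matrix ι ι ℝ)) (fun _ => 0)

def gaussian {k : ℕ} (S : Matrix (Fin k) (Fin k) ℝ) : Measure (Fin k → ℝ) :=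
  Measure.map ((msqrt S).mulVec) (Measure.pi fun _ => ProbabilityTheory.gaussianReal 0 1)

/-- Population loss. -/
def popLoss {d p : ℕ} (Sig : Matrix (Fin d) (Fin d) ℝ) (Om : Matrix (Fin p) (Fin p) ℝ)
    (M A : Matrix (Fin p) (Fin d) ℝ) (B : Matrix (Fin d) (Fin d) ℝ) : ℝ :=
  (1/2) * ∫ w : (Fin d → ℝ) × (Fin p → ℝ),
      vnorm (A.mulVec
        ((∫ x2, Real.exp (w.1 ⬝ᵥ B.mulVec x2) ∂gaussian Sig)⁻¹ •
          ∫ x2, Real.exp (w.1 ⬝ᵥ B.mulVec x2) • x2 ∂gaussian Sig)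
        - (M.mulVec w.1 + w.2)) ^ 2
    ∂((gaussian Sig).prod (gaussian Om))

/-- Population regularizer. -/
def reg {d p : ℕ} (Sig : Matrix (Fin d) (Fin d) ℝ) (A : Matrix (Fin p) (Fin d) ℝ)
    (B : Matrix (Fin d) (Fin d) ℝ) : ℝ :=
  (1/8) * frob (msqrt Sig * (Aᵀ * A - Bᵀ * Sig * B) * msqrt Sig) ^ 2

/-- Vertical concatenation of `A` and `B`. -/
def vcat {d p : ℕ} (A : Matrix (Fin p) (Fin d) ℝ) (B : Matrix (Fin d) (Fin d) ℝ) :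
    Matrix (Fin p ⊕ Fin d) (Fin d) ℝ := Matrix.of (Sum.elim A B)

def topM {d p : ℕ} (θ : Matrix (Fin p ⊕ Fin d) (Fin d) ℝ) : Matrix (Fin p) (Fin d) ℝ :=
  Matrix.of fun i j => θ (Sum.inl i) j

def botM {d p : ℕ} (θ : Matrix (Fin p ⊕ Fin d) (Fin d) ℝ) : Matrix (Fin d) (Fin d) ℝ :=
  Matrix.of fun i j => θ (Sum.inr i) j

/-- Extended covariance matrix `P = diag(I_p, Σ)`. -/
def Pmat (p : ℕ) {d : ℕ} (Sig : Matrix (Fin d) (Fin d) ℝ) :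
    Matrix (Fin p ⊕ Fin d) (Fin p ⊕ Fin d) ℝ :=
  Matrix.fromBlocks 1 0 0 Sig

def Pinner {d p : ℕ} (Sig : Matrix (Fin d) (Fin d) ℝ)
    (θ1 θ2 : Matrix (Fin p ⊕ Fin d) (Fin d) ℝ) : ℝ :=
  (θ1ᵀ * Pmat p Sig * θ2).trace

def Pnorm {d p : ℕ} (Sig : Matrix (Fin d) (Fin d) ℝ)
    (θ : Matrix (Fin p ⊕ Fin d) (Fin d) ℝ) : ℝ :=
  Real.sqrt (Pinner Sig θ θ)

attribute [local instance] Matrix.normedAddCommGroup Matrix.normedSpace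

/-- Gradient (w.r.t. the Frobenius inner product) of a scalar function of a matrix. -/
def matGrad {ι κ : Type*} [Fintype ι] [Fintype κ] [DecidableEq ι] [DecidableEq κ]
    (f : Matrix ι κ ℝ → ℝ) (θ : Matrix ι κ ℝ) : Matrix ι κ ℝ :=
  Matrix.of fun i j => fderiv ℝ f θ (Matrix.single i j 1)

/-- Regularized population loss as a function of the concatenated parameter. -/
def Qfun {d p : ℕ} (Sig : Matrix (Fin d) (Fin d) ℝ) (Om : Matrix (Fin p) (Fin p) ℝ)
    (M : Matrix (Fin p) (Fin d) ℝ) (θ : Matrix (Fin p ⊕ Fin d) (Fin d) ℝ) : ℝ :=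
  popLoss Sig Om M (topM θ) (botM θ) + reg Sig (topM θ) (botM θ)

def gradQ {d p : ℕ} (Sig : Matrix (Fin d) (Fin d) ℝ) (Om : Matrix (Fin p) (Fin p) ℝ)
    (M : Matrix (Fin p) (Fin d) ℝ) (θ : Matrix (Fin p ⊕ Fin d) (Fin d) ℝ) :
    Matrix (Fin p ⊕ Fin d) (Fin d) ℝ :=
  matGrad (Qfun Sig Om M) θ

/-- The manifold `S` of global minimizers. -/
def Sman {d p : ℕ} (Sig : Matrix (Fin d) (Fin d) ℝ) (U : Matrix (Fin p) (Fin d) ℝ)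
    (Γ V : Matrix (Fin d) (Fin d) ℝ) : Set (Matrix (Fin p ⊕ Fin d) (Fin d) ℝ) :=
  {θ | ∃ J : Matrix (Fin d) (Fin d) ℝ, Jᵀ * J = 1 ∧
    θ = vcat (U * msqrt Γ * Jᵀ * (msqrt Sig)⁻¹)
             ((msqrt Sig)⁻¹ * V * msqrt Γ * Jᵀ * (msqrt Sig)⁻¹)}

def K0 {d p : ℕ} (Sig : Matrix (Fin d) (Fin d) ℝ) (M : Matrix (Fin p) (Fin d) ℝ) : ℝ :=
  2 * svalMin (M * msqrt Sig) * svalMin Sig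

def K1 {d p : ℕ} (Sig : Matrix (Fin d) (Fin d) ℝ) (M : Matrix (Fin p) (Fin d) ℝ) : ℝ :=
  2 * svalMax (M * msqrt Sig) * svalMax Sig

def betaC {d p : ℕ} (Sig : Matrix (Fin d) (Fin d) ℝ) (M : Matrix (Fin p) (Fin d) ℝ) : ℝ :=
  (14 + 7 * (svalMax Sig / svalMin Sig) ^ 2) * K1 Sig M ^ 2
    + 21 * opN Sig ^ 2 * K1 Sig M + 7 * opN Sig ^ 4

def eps0 {d p : ℕ} (Sig : Matrix (Fin d) (Fin d) ℝ) (M : Matrix (Fin p) (Fin d) ℝ) : ℝ :=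
  min 1 (min (Real.sqrt (K0 Sig M / (3 * K1 Sig M * opN Sig)))
    (Real.sqrt (Real.sqrt (K0 Sig M / 2)) / Real.sqrt (opN Sig)))

def eps1 {d p : ℕ} (Sig : Matrix (Fin d) (Fin d) ℝ) (M : Matrix (Fin p) (Fin d) ℝ) : ℝ :=
  (1 / (2 * Real.sqrt (opN Sig))) * (1/16 - Real.sqrt (svalMax (M * msqrt Sig)))

/-- Softmax self-attention weights. -/
def softmaxW {d n : ℕ} (B : Matrix (Fin d) (Fin d) ℝ) (X : Fin n → Fin d → ℝ)
    (i j : Fin n) : ℝ :=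
  Real.exp (X i ⬝ᵥ B.mulVec (X j)) / ∑ k, Real.exp (X i ⬝ᵥ B.mulVec (X k))

/-- Softmax-weighted mean `μ_i`. -/
def wmean {d n : ℕ} (B : Matrix (Fin d) (Fin d) ℝ) (X : Fin n → Fin d → ℝ)
    (i : Fin n) : Fin d → ℝ :=
  ∑ j, softmaxW B X i j • X j


/-- Empirical covariance of a sample. -/
def empCov {d n : ℕ} (X : Fin n → Fin d → ℝ) : Matrix (Fin d) (Fin d) ℝ :=
  (n:ℝ)⁻¹ • ∑ i, Matrix.vecMulVec (X i) (X i)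


section NormLemmas2


variable {ι κ : Type*} [Fintype ι] [Fintype κ]

lemma vnorm_nonneg (v : ι → ℝ) : 0 ≤ vnorm v := Real.sqrt_nonneg _

lemma frob_nonneg (A : Matrix ι κ ℝ) : 0 ≤ frob A := Real.sqrt_nonneg _

lemma vnorm_mulVec_le (A : Matrix ι κ ℝ) (x : κ → ℝ) :
    vnorm (A.mulVec x) ≤ frob A * vnorm x := by
  rw [vnorm, frob, vnorm, ← Real.sqrt_mul (by positivity)]
  apply Real.sqrt_le_sqrt
  rw [Finset.sum_mul]
  apply Finset.sum_le_sum
  intro i _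
  calc (A.mulVec x i) ^ 2 = (∑ j, A i j * x j) ^ 2 := by
        simp [Matrix.mulVec, dotProduct]
    _ ≤ (∑ j, (A i j) ^ 2) * ∑ j, (x j) ^ 2 := Finset.sum_mul_sq_le_sq_mul_sq _ _ _

lemma opN_bddAbove (A : Matrix ι κ ℝ) :
    BddAbove {r | ∃ x : κ → ℝ, vnorm x ≤ 1 ∧ r = vnorm (A.mulVec x)} := by
  refine ⟨frob A, ?_⟩
  rintro r ⟨x, hx, rfl⟩
  calc vnorm (A.mulVec x) ≤ frob A * vnorm x := vnorm_mulVec_le A x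
    _ ≤ frob A * 1 := mul_le_mul_of_nonneg_left hx (frob_nonneg A)
    _ = frob A := mul_one _

lemma opN_le_frob (A : Matrix ι κ ℝ) : opN A ≤ frob A := by
  apply Real.sSup_le _ (frob_nonneg A)
  rintro r ⟨x, hx, rfl⟩
  calc vnorm (A.mulVec x) ≤ frob A * vnorm x := vnorm_mulVec_le A x
    _ ≤ frob A * 1 := mul_le_mul_of_nonneg_left hx (frob_nonneg A)
    _ = frob A := mul_one _

lemma zero_mem_opN_set (A : Matrix ι κ ℝ) :
    (0:ℝ) ∈ {r | ∃ x : κ → ℝ, vnorm x ≤ 1 ∧ r = vnorm (A.mulVec x)} := by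
  refine ⟨0, ?_, ?_⟩
  · simp [vnorm]
  · simp [vnorm, Matrix.mulVec_zero]

lemma opN_nonneg (A : Matrix ι κ ℝ) : 0 ≤ opN A :=
  le_csSup (opN_bddAbove A) (zero_mem_opN_set A)

lemma diag_le_opN [DecidableEq κ] (A : Matrix κ κ ℝ) (a : κ) : A a a ≤ opN A := by
  have h1 : vnorm (Pi.single a (1:ℝ)) ≤ 1 := by
    rw [vnorm]
    have : ∑ j, (Pi.single a (1:ℝ) j) ^ 2 = (1:ℝ) := by
      rw [Finset.sum_eq_single a]
      · simp
      · intro b _ hb; simp [Pi.single_apply, hb]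
      · simp
    rw [this, Real.sqrt_one]
  have hmem : vnorm (A.mulVec (Pi.single a 1)) ∈
      {r | ∃ x : κ → ℝ, vnorm x ≤ 1 ∧ r = vnorm (A.mulVec x)} := ⟨_, h1, rfl⟩
  have h2 : A a a ≤ vnorm (A.mulVec (Pi.single a 1)) := by
    rw [vnorm]
    have hle : (A a a) ^ 2 ≤ ∑ i, (A.mulVec (Pi.single a 1) i) ^ 2 := by
      have : A.mulVec (Pi.single a 1) a = A a a := by simp [Matrix.mulVec_single]
      calc (A a a) ^ 2 = (A.mulVec (Pi.single a 1) a) ^ 2 := by rw [this]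
        _ ≤ ∑ i, (A.mulVec (Pi.single a 1) i) ^ 2 :=
            Finset.single_le_sum (f := fun i => (A.mulVec (Pi.single a 1) i) ^ 2)
              (fun i _ => sq_nonneg _) (Finset.mem_univ a)
    calc A a a ≤ |A a a| := le_abs_self _
      _ = Real.sqrt ((A a a) ^ 2) := (Real.sqrt_sq_eq_abs _).symm
      _ ≤ _ := Real.sqrt_le_sqrt hle
  exact h2.trans (le_csSup (opN_bddAbove A) hmem)


end NormLemmas2

open ProbabilityTheory
open scoped ENNReal NNReal

section GaussianRealMoments2


lemma gaussianReal_eq_withDensity :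
    gaussianReal 0 1 = volume.withDensity
      (fun x => ((gaussianPDFReal 0 1 x).toNNReal : ℝ≥0∞)) := by
  rw [gaussianReal_of_var_ne_zero 0 one_ne_zero]
  rfl

lemma integrable_gaussianReal_iff {g : ℝ → ℝ} :
    Integrable g (gaussianReal 0 1) ↔
      Integrable (fun x => gaussianPDFReal 0 1 x * g x) volume := by
  rw [gaussianReal_eq_withDensity,
    integrable_withDensity_iff_integrable_smul
      ((measurable_gaussianPDFReal 0 1).real_toNNReal)]
  constructor <;> intro h <;> refine h.congr (Filter.Eventually.of_forall fun x => ?_)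
  · simp [NNReal.smul_def, Real.coe_toNNReal _ (gaussianPDFReal_nonneg 0 1 x)]
  · simp [NNReal.smul_def, Real.coe_toNNReal _ (gaussianPDFReal_nonneg 0 1 x)]

lemma integral_gaussianReal_eq {g : ℝ → ℝ} :
    ∫ x, g x ∂(gaussianReal 0 1) = ∫ x, gaussianPDFReal 0 1 x * g x := by
  rw [gaussianReal_eq_withDensity,
    integral_withDensity_eq_integral_smul
      ((measurable_gaussianPDFReal 0 1).real_toNNReal)]
  refine integral_congr_ae (Filter.Eventually.of_forall fun x => ?_)
  simp [NNReal.smul_def, Real.coe_toNNReal _ (gaussianPDFReal_nonneg 0 1 x)]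

lemma gaussianPDFReal_zero_one (x : ℝ) :
    gaussianPDFReal 0 1 x = (Real.sqrt (2 * π))⁻¹ * Real.exp (-(2⁻¹) * x ^ 2) := by
  rw [gaussianPDFReal]
  congr 1
  · norm_num
  · congr 1
    push_cast
    ring

lemma integrable_id_gaussianReal : Integrable (fun x : ℝ => x) (gaussianReal 0 1) := by
  rw [integrable_gaussianReal_iff]
  have h : (fun x : ℝ => gaussianPDFReal 0 1 x * x)
      = fun x => (Real.sqrt (2 * π))⁻¹ * (x * Real.exp (-(2⁻¹) * x ^ 2)) := by
    funext x; rw [gaussianPDFReal_zero_one]; ring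
  rw [h]
  exact (integrable_mul_exp_neg_mul_sq (by norm_num : (0:ℝ) < 2⁻¹)).const_mul _

lemma integrable_sq_gaussianReal : Integrable (fun x : ℝ => x * x) (gaussianReal 0 1) := by
  rw [integrable_gaussianReal_iff]
  have h : (fun x : ℝ => gaussianPDFReal 0 1 x * (x * x))
      = fun x => (Real.sqrt (2 * π))⁻¹ * (x ^ (2:ℝ) * Real.exp (-(2⁻¹) * x ^ 2)) := by
    funext x
    rw [gaussianPDFReal_zero_one, Real.rpow_two]
    ring
  rw [h]
  exact (integrable_rpow_mul_exp_neg_mul_sq (by norm_num : (0:ℝ) < 2⁻¹)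
    (by norm_num : (-1:ℝ) < 2)).const_mul _

lemma integral_id_gaussianReal_zero : ∫ x, x ∂(gaussianReal 0 1) = 0 := by
  rw [integral_gaussianReal_eq]
  have h : (fun x : ℝ => gaussianPDFReal 0 1 x * x)
      = fun x => (Real.sqrt (2 * π))⁻¹ * (x * Real.exp (-(2⁻¹) * x ^ 2)) := by
    funext x; rw [gaussianPDFReal_zero_one]; ring
  rw [h, integral_const_mul]
  have hodd := integral_neg_eq_self (fun x : ℝ => x * Real.exp (-(2⁻¹) * x ^ 2)) volume
  simp only [neg_mul, neg_sq, neg_neg] at hodd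
  rw [integral_neg] at hodd
  simp only [neg_mul] at *
  have : ∫ x : ℝ, x * Real.exp (-(2⁻¹ * x ^ 2)) = 0 := by linarith
  rw [this, mul_zero]


end GaussianRealMoments2

section PiHelpers2


variable {α : Type*} [MeasurableSpace α] {μ : Measure α} [IsProbabilityMeasure μ]
  {ι : Type*} [Fintype ι] [DecidableEq ι]

lemma prod_two_aux {M : Type*} [CommMonoid M] (i j : ι) (u v : ι → M) :
    (∏ k, ((if k = i then u k else 1) * (if k = j then v k else 1))) = u i * v j := by
  rw [Finset.prod_mul_distrib, Finset.prod_ite_eq', Finset.prod_ite_eq']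
  simp

lemma pi_integrable_coord (i : ι) {f : α → ℝ} (hf : Integrable f μ) :
    Integrable (fun X : ι → α => f (X i)) (Measure.pi fun _ => μ) := by
  letI : MeasureSpace α := ⟨μ⟩
  haveI : SigmaFinite (volume : Measure α) := inferInstanceAs (SigmaFinite μ)
  have h2 : (fun X : ι → α => f (X i))
      = fun X => ∏ k, (if k = i then f (X k) else 1) := by
    funext X
    rw [Finset.prod_ite_eq']
    simp
  rw [h2]
  have hI := Integrable.fintype_prod (𝕜 := ℝ) (E := α)
    (f := fun k x => if k = i then f x else 1) (fun k => by
      by_cases hk : k = i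
      · simp only [if_pos hk]
        exact hf
      · simp only [if_neg hk]
        exact integrable_const 1)
  exact hI

lemma pi_integral_coord (i : ι) (f : α → ℝ) :
    ∫ X : ι → α, f (X i) ∂(Measure.pi fun _ => μ) = ∫ x, f x ∂μ := by
  letI : MeasureSpace α := ⟨μ⟩
  haveI : SigmaFinite (volume : Measure α) := inferInstanceAs (SigmaFinite μ)
  have h2 : (fun X : ι → α => f (X i))
      = fun X => ∏ k, (if k = i then f (X k) else 1) := by
    funext X
    rw [Finset.prod_ite_eq']
    simp
  rw [h2]
  show (∫ X : ι → α, ∏ k, (if k = i then f (X k) else 1) ∂(volume : Measure (ι → α)))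
      = ∫ x, f x ∂μ
  rw [show (volume : Measure (ι → α)) = Measure.pi (fun _ => (volume : Measure α)) from rfl]
  rw [← volume_pi]
  rw [integral_fintype_prod_volume_eq_prod (𝕜 := ℝ) (ι := ι) (fun k (x : α) => if k = i then f x else 1)]
  have h4 : ∀ k, (∫ x : α, (if k = i then f x else 1) ∂(volume : Measure α))
      = if k = i then ∫ x, f x ∂μ else 1 := by
    intro k
    by_cases hk : k = i
    · simp only [if_pos hk]; rfl
    · simp only [if_neg hk]
      show ∫ _ : α, (1:ℝ) ∂μ = 1
      simp
  simp_rw [h4]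
  rw [Finset.prod_ite_eq']
  simp

lemma pi_integrable_mul_coord {i j : ι} (hij : i ≠ j) {f g : α → ℝ}
    (hf : Integrable f μ) (hg : Integrable g μ) :
    Integrable (fun X : ι → α => f (X i) * g (X j)) (Measure.pi fun _ => μ) := by
  letI : MeasureSpace α := ⟨μ⟩
  haveI : SigmaFinite (volume : Measure α) := inferInstanceAs (SigmaFinite μ)
  have h2 : (fun X : ι → α => f (X i) * g (X j))
      = fun X => ∏ k, ((if k = i then f (X k) else 1) * (if k = j then g (X k) else 1)) := by
    funext X
    rw [prod_two_aux]
  rw [h2]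
  have hI := Integrable.fintype_prod (𝕜 := ℝ) (E := α) (μ := fun _ => μ)
    (f := fun k x => (if k = i then f x else 1) * (if k = j then g x else 1)) (fun k => by
      by_cases hk : k = i
      · subst hk
        simp only [if_pos rfl, if_neg hij]
        simpa using hf
      · by_cases hk' : k = j
        · subst hk'
          simp only [if_neg hk, if_pos rfl]
          simpa using hg
        · simp only [if_neg hk, if_neg hk', mul_one]
          exact integrable_const 1)
  exact hI

lemma pi_integral_mul_coord {i j : ι} (hij : i ≠ j) (f g : α → ℝ) :
    ∫ X : ι → α, f (X i) * g (X j) ∂(Measure.pi fun _ => μ)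
      = (∫ x, f x ∂μ) * ∫ x, g x ∂μ := by
  letI : MeasureSpace α := ⟨μ⟩
  haveI : SigmaFinite (volume : Measure α) := inferInstanceAs (SigmaFinite μ)
  have h2 : (fun X : ι → α => f (X i) * g (X j))
      = fun X => ∏ k, ((if k = i then f (X k) else 1) * (if k = j then g (X k) else 1)) := by
    funext X
    rw [prod_two_aux]
  rw [h2]
  show (∫ X : ι → α, ∏ k, ((if k = i then f (X k) else 1) * (if k = j then g (X k) else 1))
      ∂(volume : Measure (ι → α))) = _
  rw [integral_fintype_prod_volume_eq_prod (𝕜 := ℝ) (ι := ι)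
    (fun k (x : α) => (if k = i then f x else 1) * (if k = j then g x else 1))]
  have h4 : ∀ k, (∫ x : α, ((if k = i then f x else 1) * (if k = j then g x else 1))
        ∂(volume : Measure α))
      = (if k = i then ∫ x, f x ∂μ else 1) * (if k = j then ∫ x, g x ∂μ else 1) := by
    intro k
    by_cases hk : k = i
    · subst hk
      simp only [if_pos rfl, if_neg hij, mul_one]
      rfl
    · by_cases hk' : k = j
      · subst hk'
        simp only [if_neg hk, if_pos rfl, one_mul]
        rfl
      · simp only [if_neg hk, if_neg hk', mul_one]
        show ∫ _ : α, (1:ℝ) ∂μ = 1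
        simp
  simp_rw [h4]
  rw [prod_two_aux i j (fun _ => ∫ x, f x ∂μ) (fun _ => ∫ x, g x ∂μ)]


end PiHelpers2

lemma msqrt_eq_aux {k : ℕ} {S : Matrix (Fin k) (Fin k) ℝ} (hS : S.PosSemidef) :
    msqrt S = hS.1.eigenvectorUnitary.1 * diagonal ((RCLike.ofReal : ℝ → ℝ) ∘ (√·) ∘ hS.1.eigenvalues)
      * (star hS.1.eigenvectorUnitary : Matrix (Fin k) (Fin k) ℝ) := by
  rw [msqrt]; exact dif_pos hS

lemma msqrt_mul_self_aux {k : ℕ} {S : Matrix (Fin k) (Fin k) ℝ} (hS : S.PosSemidef) :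
    msqrt S * msqrt S = S := by
  rw [msqrt_eq_aux hS]
  have hUU : (star hS.1.eigenvectorUnitary : Matrix (Fin k) (Fin k) ℝ)
      * hS.1.eigenvectorUnitary.1 = 1 := Unitary.coe_star_mul_self _
  conv_rhs => rw [hS.1.spectral_theorem, Unitary.conjStarAlgAut_apply]
  calc _ = hS.1.eigenvectorUnitary.1 * (diagonal ((RCLike.ofReal : ℝ → ℝ) ∘ (√·) ∘ hS.1.eigenvalues)
        * ((star hS.1.eigenvectorUnitary : Matrix (Fin k) (Fin k) ℝ) * hS.1.eigenvectorUnitary.1)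
        * diagonal ((RCLike.ofReal : ℝ → ℝ) ∘ (√·) ∘ hS.1.eigenvalues))
        * (star hS.1.eigenvectorUnitary : Matrix (Fin k) (Fin k) ℝ) := by
        simp only [Matrix.mul_assoc]
    _ = _ := by
      rw [hUU, Matrix.mul_one, diagonal_mul_diagonal]
      congr 3
      funext i
      simp [Real.mul_self_sqrt (hS.eigenvalues_nonneg i)]

lemma msqrt_symm_aux {k : ℕ} {S : Matrix (Fin k) (Fin k) ℝ} (hS : S.PosSemidef) (a j : Fin k) :
    msqrt S a j = msqrt S j a := by
  have hH : (msqrt S).IsHermitian := by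
    rw [msqrt_eq_aux hS, IsHermitian, conjTranspose_mul, conjTranspose_mul, diagonal_conjTranspose]
    simp [Matrix.mul_assoc, Matrix.star_eq_conjTranspose, conjTranspose_eq_transpose_of_trivial]
  have := hH.apply j a
  simpa using this

section GaussianMeasure2


variable {k : ℕ} (S : Matrix (Fin k) (Fin k) ℝ)

lemma measurable_mulVec (M : Matrix (Fin k) (Fin k) ℝ) :
    Measurable (M.mulVec : (Fin k → ℝ) → (Fin k → ℝ)) := by
  apply measurable_pi_lambda
  intro a
  show Measurable fun g : Fin k → ℝ => ∑ j, M a j * g j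
  exact Finset.measurable_sum _ (fun j _ => (measurable_pi_apply j).const_mul _)

instance gaussian_isProbability : IsProbabilityMeasure (gaussian S) := by
  rw [gaussian]
  exact Measure.isProbabilityMeasure_map (measurable_mulVec _).aemeasurable

lemma integrable_eval_gaussian (a : Fin k) :
    Integrable (fun x : Fin k → ℝ => x a) (gaussian S) := by
  rw [gaussian, integrable_map_measure
    (Continuous.aestronglyMeasurable (continuous_apply a))
    (measurable_mulVec _).aemeasurable]
  have h2 : ((fun x : Fin k → ℝ => x a) ∘ (msqrt S).mulVec)
      = fun v : Fin k → ℝ => ∑ j, msqrt S a j * v j := by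
    funext v
    simp [Function.comp, Matrix.mulVec, dotProduct]
  rw [h2]
  apply integrable_finset_sum
  intro j _
  exact (pi_integrable_coord j integrable_id_gaussianReal).const_mul _

lemma integral_eval_gaussian (a : Fin k) :
    ∫ x : Fin k → ℝ, x a ∂(gaussian S) = 0 := by
  rw [gaussian, integral_map (measurable_mulVec _).aemeasurable
    (Continuous.aestronglyMeasurable (continuous_apply a))]
  have h2 : (fun v : Fin k → ℝ => (msqrt S).mulVec v a)
      = fun v : Fin k → ℝ => ∑ j, msqrt S a j * v j := by
    funext v
    simp [Matrix.mulVec, dotProduct]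
  rw [h2]
  rw [integral_finset_sum _ (fun j _ =>
    (pi_integrable_coord j integrable_id_gaussianReal).const_mul _)]
  have h3 : ∀ j : Fin k, ∫ v : Fin k → ℝ, msqrt S a j * v j
      ∂(Measure.pi fun _ => gaussianReal 0 1) = 0 := by
    intro j
    rw [integral_const_mul, pi_integral_coord j (fun x : ℝ => x),
      integral_id_gaussianReal_zero, mul_zero]
  simp_rw [h3]
  simp

lemma integrable_eval_mul_gaussian (a b : Fin k) :
    Integrable (fun x : Fin k → ℝ => x a * x b) (gaussian S) := by
  rw [gaussian, integrable_map_measure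
    (Continuous.aestronglyMeasurable (show Continuous fun x : Fin k → ℝ => x a * x b from (continuous_apply a).mul (continuous_apply b)))
    (measurable_mulVec _).aemeasurable]
  have h2 : ((fun x : Fin k → ℝ => x a * x b) ∘ (msqrt S).mulVec)
      = fun v : Fin k → ℝ => ∑ j, ∑ l, (msqrt S a j * msqrt S b l) * (v j * v l) := by
    funext v
    show (∑ j, msqrt S a j * v j) * (∑ l, msqrt S b l * v l) = _
    rw [Finset.sum_mul_sum]
    apply Finset.sum_congr rfl
    intro j _
    apply Finset.sum_congr rfl
    intro l _
    ring
  rw [h2]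
  apply integrable_finset_sum
  intro j _
  apply integrable_finset_sum
  intro l _
  by_cases hjl : j = l
  · subst hjl
    exact (pi_integrable_coord j integrable_sq_gaussianReal).const_mul _
  · exact (pi_integrable_mul_coord hjl integrable_id_gaussianReal
      integrable_id_gaussianReal).const_mul _

lemma integral_eval_mul_self_gaussian (hS : S.PosSemidef) (a : Fin k) :
    ∫ x : Fin k → ℝ, x a * x a ∂(gaussian S)
      = (∫ x : ℝ, x * x ∂(gaussianReal 0 1)) * S a a := by
  rw [gaussian, integral_map (measurable_mulVec _).aemeasurable
    (Continuous.aestronglyMeasurable (show Continuous fun x : Fin k → ℝ => x a * x a from (continuous_apply a).mul (continuous_apply a)))]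
  have h2 : (fun v : Fin k → ℝ => (msqrt S).mulVec v a * (msqrt S).mulVec v a)
      = fun v : Fin k → ℝ => ∑ j, ∑ l, (msqrt S a j * msqrt S a l) * (v j * v l) := by
    funext v
    show (∑ j, msqrt S a j * v j) * (∑ l, msqrt S a l * v l) = _
    rw [Finset.sum_mul_sum]
    apply Finset.sum_congr rfl
    intro j _
    apply Finset.sum_congr rfl
    intro l _
    ring
  rw [h2]
  rw [integral_finset_sum _ (fun j _ => integrable_finset_sum _ (fun l _ => by
    by_cases hjl : j = l
    · subst hjl
      exact (pi_integrable_coord j integrable_sq_gaussianReal).const_mul _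
    · exact (pi_integrable_mul_coord hjl integrable_id_gaussianReal
        integrable_id_gaussianReal).const_mul _))]
  have h3 : ∀ j : Fin k, (∫ v : Fin k → ℝ, ∑ l, (msqrt S a j * msqrt S a l) * (v j * v l)
      ∂(Measure.pi fun _ => gaussianReal 0 1))
      = msqrt S a j * msqrt S a j * ∫ x : ℝ, x * x ∂(gaussianReal 0 1) := by
    intro j
    rw [integral_finset_sum _ (fun l _ => by
      by_cases hjl : j = l
      · subst hjl
        exact (pi_integrable_coord j integrable_sq_gaussianReal).const_mul _
      · exact (pi_integrable_mul_coord hjl integrable_id_gaussianReal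
          integrable_id_gaussianReal).const_mul _)]
    have h4 : ∀ l : Fin k, (∫ v : Fin k → ℝ, (msqrt S a j * msqrt S a l) * (v j * v l)
        ∂(Measure.pi fun _ => gaussianReal 0 1))
        = if j = l then msqrt S a j * msqrt S a j * ∫ x : ℝ, x * x ∂(gaussianReal 0 1)
          else 0 := by
      intro l
      by_cases hjl : j = l
      · subst hjl
        rw [if_pos rfl, integral_const_mul]
        have : (fun v : Fin k → ℝ => v j * v j) = fun v => (fun x : ℝ => x * x) (v j) := rfl
        rw [this, pi_integral_coord j (fun x : ℝ => x * x)]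
      · rw [if_neg hjl, integral_const_mul]
        have : (fun v : Fin k → ℝ => v j * v l)
            = fun v => (fun x : ℝ => x) (v j) * (fun x : ℝ => x) (v l) := rfl
        rw [this, pi_integral_mul_coord hjl (fun x : ℝ => x) (fun x : ℝ => x),
          integral_id_gaussianReal_zero, mul_zero, mul_zero]
    simp_rw [h4]
    rw [Finset.sum_ite_eq Finset.univ j
      (fun _ => msqrt S a j * msqrt S a j * ∫ x : ℝ, x * x ∂(gaussianReal 0 1))]
    simp
  simp_rw [h3]
  rw [← Finset.sum_mul, mul_comm]
  congr 1
  have hsym : ∀ j, msqrt S a j = msqrt S j a := by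
    intro j
    exact msqrt_symm_aux hS a j
  have : ∑ j, msqrt S a j * msqrt S a j = ∑ j, msqrt S a j * msqrt S j a := by
    apply Finset.sum_congr rfl
    intro j _
    rw [← hsym j]
  rw [this]
  calc ∑ j, msqrt S a j * msqrt S j a = (msqrt S * msqrt S) a a := by
        rw [Matrix.mul_apply]
    _ = S a a := by rw [msqrt_mul_self_aux hS]


end GaussianMeasure2

lemma psd_diag_nonneg {k : ℕ} {A : Matrix (Fin k) (Fin k) ℝ} (hA : A.PosSemidef)
    (a : Fin k) : 0 ≤ A a a := by
  exact hA.diag_nonneg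

/-- High-probability bound on the noise–covariate correlation. -/
theorem noise_covariate_correlation_bound
    {d p : ℕ}
    (Sig : Matrix (Fin d) (Fin d) ℝ) (Om : Matrix (Fin p) (Fin p) ℝ)
    (hSig : Sig.PosDef) (hOm : Om.PosSemidef)
    (δ : ℝ) (hδ : δ ∈ Set.Ioo (0:ℝ) 1) :
    ∃ n0 : ℕ, ∀ n : ℕ, n0 ≤ n →
      ENNReal.ofReal (1 - δ/4)
        ≤ ((Measure.pi fun _ : Fin n => gaussian Sig).prod
              (Measure.pi fun _ : Fin n => gaussian Om))
            {ω : (Fin n → Fin d → ℝ) × (Fin n → Fin p → ℝ) |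
              opN ((n:ℝ)⁻¹ • ∑ i, Matrix.vecMulVec (ω.2 i) (ω.1 i))
                ≤ (2 * Real.sqrt 2 * Real.sqrt (opN Om) * opN Sig)
                    * Real.sqrt (Real.log (4 * n / δ)) / Real.sqrt n} := by
  obtain ⟨hδ0, hδ1⟩ := hδ
  set K5 : ℝ := 2 * Real.sqrt 2 * Real.sqrt (opN Om) * opN Sig with hK5def
  have hK5nn : (0:ℝ) ≤ K5 := by
    rw [hK5def]
    exact mul_nonneg (mul_nonneg (by positivity) (Real.sqrt_nonneg _)) (opN_nonneg _)
  set m2 : ℝ := ∫ x : ℝ, x * x ∂(gaussianReal 0 1) with hm2def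
  set C : ℝ := (m2 * ∑ a, Om a a) * (m2 * ∑ b, Sig b b) with hCdef
  set B : ℝ := C * 4 / (δ * K5 ^ 2) with hBdef
  refine ⟨max 1 ⌈Real.exp B⌉₊, fun n hn => ?_⟩
  have hn1 : 1 ≤ n := le_trans (le_max_left _ _) hn
  have hnR1 : (1:ℝ) ≤ (n:ℝ) := by exact_mod_cast hn1
  have hnpos : (0:ℝ) < (n:ℝ) := lt_of_lt_of_le zero_lt_one hnR1
  have hnne : (n:ℝ) ≠ 0 := ne_of_gt hnpos
  set μn := ((Measure.pi fun _ : Fin n => gaussian Sig).prod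
      (Measure.pi fun _ : Fin n => gaussian Om)) with hμn
  set L : ℝ := Real.log (4 * (n:ℝ) / δ) with hLdef
  set tn : ℝ := K5 * Real.sqrt L / Real.sqrt (n:ℝ) with htn
  have hLpos : 0 < L := by
    rw [hLdef]
    apply Real.log_pos
    rw [lt_div_iff₀ hδ0]
    nlinarith
  have htnn : 0 ≤ tn := by
    rw [htn]
    exact div_nonneg (mul_nonneg hK5nn (Real.sqrt_nonneg _)) (Real.sqrt_nonneg _)
  set f : ((Fin n → Fin d → ℝ) × (Fin n → Fin p → ℝ)) → ℝ :=
    fun ω => ∑ a, ∑ b, ((n:ℝ)⁻¹ * ∑ i, ω.2 i a * ω.1 i b) ^ 2 with hfdef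
  have hf_nonneg : ∀ ω, 0 ≤ f ω := fun ω =>
    Finset.sum_nonneg fun a _ => Finset.sum_nonneg fun b _ => sq_nonneg _
  have hfrob : ∀ ω : (Fin n → Fin d → ℝ) × (Fin n → Fin p → ℝ),
      frob ((n:ℝ)⁻¹ • ∑ i, Matrix.vecMulVec (ω.2 i) (ω.1 i)) = Real.sqrt (f ω) := by
    intro ω
    rw [hfdef]
    simp only [frob]
    congr 1
    apply Finset.sum_congr rfl
    intro a _
    apply Finset.sum_congr rfl
    intro b _
    congr 1
    simp [Matrix.smul_apply, smul_eq_mul, Matrix.sum_apply, Matrix.vecMulVec_apply]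
  set g : ((Fin n → Fin d → ℝ) × (Fin n → Fin p → ℝ)) → ℝ :=
    fun ω => ∑ q : (Fin p × Fin d) × (Fin n × Fin n),
      ((n:ℝ)⁻¹ * (n:ℝ)⁻¹) *
        ((ω.2 q.2.1 q.1.1 * ω.2 q.2.2 q.1.1) * (ω.1 q.2.1 q.1.2 * ω.1 q.2.2 q.1.2))
    with hgdef
  have hfg : ∀ ω, f ω = g ω := by
    intro ω
    rw [hfdef, hgdef]
    simp only [Fintype.sum_prod_type]
    apply Finset.sum_congr rfl
    intro a _
    apply Finset.sum_congr rfl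
    intro b _
    have e1 : ((n:ℝ)⁻¹ * ∑ i, ω.2 i a * ω.1 i b) ^ 2
        = ((n:ℝ)⁻¹ * (n:ℝ)⁻¹) *
            ((∑ i, ω.2 i a * ω.1 i b) * (∑ j, ω.2 j a * ω.1 j b)) := by ring
    rw [e1, Finset.sum_mul_sum, Finset.mul_sum]
    apply Finset.sum_congr rfl
    intro i _
    rw [Finset.mul_sum]
    apply Finset.sum_congr rfl
    intro j _
    ring
  have hfX : ∀ (i j : Fin n) (b : Fin d),
      Integrable (fun X : Fin n → Fin d → ℝ => X i b * X j b)
        (Measure.pi fun _ : Fin n => gaussian Sig) := by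
    intro i j b
    by_cases hij : i = j
    · subst hij
      exact pi_integrable_coord (f := fun v : Fin d → ℝ => v b * v b) i
        (integrable_eval_mul_gaussian Sig b b)
    · exact pi_integrable_mul_coord (f := fun v : Fin d → ℝ => v b)
        (g := fun v : Fin d → ℝ => v b) hij
        (integrable_eval_gaussian Sig b) (integrable_eval_gaussian Sig b)
  have hgZ : ∀ (i j : Fin n) (a : Fin p),
      Integrable (fun Z : Fin n → Fin p → ℝ => Z i a * Z j a)
        (Measure.pi fun _ : Fin n => gaussian Om) := by
    intro i j a
    by_cases hij : i = j
    · subst hij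
      exact pi_integrable_coord (f := fun v : Fin p → ℝ => v a * v a) i
        (integrable_eval_mul_gaussian Om a a)
    · exact pi_integrable_mul_coord (f := fun v : Fin p → ℝ => v a)
        (g := fun v : Fin p → ℝ => v a) hij
        (integrable_eval_gaussian Om a) (integrable_eval_gaussian Om a)
  have hTint : ∀ (a : Fin p) (b : Fin d) (i j : Fin n),
      Integrable (fun ω : (Fin n → Fin d → ℝ) × (Fin n → Fin p → ℝ) =>
        (ω.2 i a * ω.2 j a) * (ω.1 i b * ω.1 j b)) μn := by
    intro a b i j
    have h := (hfX i j b).mul_prod (hgZ i j a)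
    exact h.congr (Filter.Eventually.of_forall fun ω => mul_comm _ _)
  have hgInt : Integrable g μn := by
    rw [hgdef]
    apply integrable_finset_sum
    rintro ⟨⟨a, b⟩, i, j⟩ _
    exact (hTint a b i j).const_mul _
  have hTval : ∀ (a : Fin p) (b : Fin d) (i j : Fin n),
      (∫ ω : (Fin n → Fin d → ℝ) × (Fin n → Fin p → ℝ),
        (ω.2 i a * ω.2 j a) * (ω.1 i b * ω.1 j b) ∂μn)
      = if i = j then (m2 * Sig b b) * (m2 * Om a a) else 0 := by
    intro a b i j
    have e1 : (∫ ω : (Fin n → Fin d → ℝ) × (Fin n → Fin p → ℝ),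
          (ω.2 i a * ω.2 j a) * (ω.1 i b * ω.1 j b) ∂μn)
        = ∫ ω : (Fin n → Fin d → ℝ) × (Fin n → Fin p → ℝ),
            (fun X : Fin n → Fin d → ℝ => X i b * X j b) ω.1 *
            (fun Z : Fin n → Fin p → ℝ => Z i a * Z j a) ω.2 ∂μn :=
      integral_congr_ae (Filter.Eventually.of_forall fun ω => mul_comm _ _)
    have hpm := integral_prod_mul (μ := Measure.pi fun _ : Fin n => gaussian Sig)
      (ν := Measure.pi fun _ : Fin n => gaussian Om)
      (f := fun X : Fin n → Fin d → ℝ => X i b * X j b)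
      (g := fun Z : Fin n → Fin p → ℝ => Z i a * Z j a)
    rw [e1, hμn, hpm]
    by_cases hij : i = j
    · subst hij
      rw [if_pos rfl]
      have h1 : (∫ X : Fin n → Fin d → ℝ, X i b * X i b
            ∂(Measure.pi fun _ : Fin n => gaussian Sig)) = m2 * Sig b b := by
        have h := pi_integral_coord (μ := gaussian Sig) i (fun v : Fin d → ℝ => v b * v b)
        rw [integral_eval_mul_self_gaussian Sig hSig.posSemidef b] at h
        exact h
      have h2 : (∫ Z : Fin n → Fin p → ℝ, Z i a * Z i a
            ∂(Measure.pi fun _ : Fin n => gaussian Om)) = m2 * Om a a := by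
        have h := pi_integral_coord (μ := gaussian Om) i (fun v : Fin p → ℝ => v a * v a)
        rw [integral_eval_mul_self_gaussian Om hOm a] at h
        exact h
      simp only [h1, h2]
    · rw [if_neg hij]
      have h1 : (∫ X : Fin n → Fin d → ℝ, X i b * X j b
            ∂(Measure.pi fun _ : Fin n => gaussian Sig)) = 0 := by
        have h := pi_integral_mul_coord (μ := gaussian Sig) hij
          (fun v : Fin d → ℝ => v b) (fun v : Fin d → ℝ => v b)
        rw [integral_eval_gaussian Sig b, mul_zero] at h
        exact h
      simp only [h1, zero_mul]
  have hgVal : ∫ ω, g ω ∂μn = (n:ℝ)⁻¹ * C := by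
    simp only [hgdef]
    rw [integral_finset_sum _ (fun q _ => (hTint q.1.1 q.1.2 q.2.1 q.2.2).const_mul _)]
    simp only [integral_const_mul, hTval]
    simp only [Fintype.sum_prod_type]
    simp only [mul_ite, mul_zero, Finset.sum_ite_eq, Finset.mem_univ, if_true]
    simp only [Finset.sum_const, Finset.card_univ, Fintype.card_fin, nsmul_eq_mul]
    have hstep : ∀ (a : Fin p) (b : Fin d),
        (n:ℝ) * (((n:ℝ)⁻¹ * (n:ℝ)⁻¹) * ((m2 * Sig b b) * (m2 * Om a a)))
        = (n:ℝ)⁻¹ * ((m2 * Om a a) * (m2 * Sig b b)) := by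
      intro a b
      field_simp
    simp_rw [hstep]
    have hCsum : C = ∑ a : Fin p, ∑ b : Fin d, (m2 * Om a a) * (m2 * Sig b b) := by
      rw [hCdef, Finset.mul_sum, Finset.mul_sum, Finset.sum_mul_sum]
    rw [hCsum, Finset.mul_sum]
    apply Finset.sum_congr rfl
    intro a _
    rw [Finset.mul_sum]
  have hg_nonneg : 0 ≤ᵐ[μn] g :=
    Filter.Eventually.of_forall fun ω => by rw [← hfg ω]; exact hf_nonneg ω
  have hS1meas : MeasurableSet
      {ω : (Fin n → Fin d → ℝ) × (Fin n → Fin p → ℝ) | tn < Real.sqrt (f ω)} := by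
    have hcont : Continuous f := by
      rw [hfdef]
      fun_prop
    exact measurableSet_lt measurable_const (Real.continuous_sqrt.comp hcont).measurable
  have hmain : μn {ω : (Fin n → Fin d → ℝ) × (Fin n → Fin p → ℝ) | tn < Real.sqrt (f ω)}
      ≤ ENNReal.ofReal (δ / 4) := by
    by_cases hK5 : K5 = 0
    · have hC0 : C = 0 := by
        have h0 : 2 * Real.sqrt 2 * Real.sqrt (opN Om) * opN Sig = 0 := by
          rw [← hK5def]; exact hK5
        rcases mul_eq_zero.mp h0 with h1 | hSig0
        · rcases mul_eq_zero.mp h1 with h2 | hOm0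
          · exact absurd h2 (by positivity)
          · have hOm0' : opN Om = 0 :=
              le_antisymm (Real.sqrt_eq_zero'.mp hOm0) (opN_nonneg _)
            have hsum : ∑ a, Om a a = 0 := Finset.sum_eq_zero fun a _ =>
              le_antisymm ((diag_le_opN Om a).trans hOm0'.le) (psd_diag_nonneg hOm a)
            rw [hCdef, hsum, mul_zero, zero_mul]
        · have hsum : ∑ b, Sig b b = 0 := Finset.sum_eq_zero fun b _ =>
            le_antisymm ((diag_le_opN Sig b).trans hSig0.le)
              (psd_diag_nonneg hSig.posSemidef b)
          rw [hCdef, hsum, mul_zero, mul_zero]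
      have hgzero : ∫ ω, g ω ∂μn = 0 := by rw [hgVal, hC0, mul_zero]
      have hae : g =ᵐ[μn] 0 :=
        (integral_eq_zero_iff_of_nonneg
          (fun ω => by rw [← hfg ω]; exact hf_nonneg ω) hgInt).mp hgzero
      have htn0 : tn = 0 := by rw [htn, hK5, zero_mul, zero_div]
      have hsub : {ω : (Fin n → Fin d → ℝ) × (Fin n → Fin p → ℝ) | tn < Real.sqrt (f ω)}
          ⊆ {ω | ¬ g ω = 0} := by
        intro ω hω
        simp only [Set.mem_setOf_eq] at hω ⊢
        intro hg0
        rw [htn0] at hω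
        rw [hfg ω, hg0, Real.sqrt_zero] at hω
        exact lt_irrefl 0 hω
      have hnull : μn {ω : (Fin n → Fin d → ℝ) × (Fin n → Fin p → ℝ) | ¬ g ω = 0} = 0 := by
        have h := hae
        rw [Filter.EventuallyEq, ae_iff] at h
        simpa using h
      have : μn {ω : (Fin n → Fin d → ℝ) × (Fin n → Fin p → ℝ) | tn < Real.sqrt (f ω)} = 0 :=
        measure_mono_null hsub hnull
      rw [this]
      positivity
    · have hK5pos : 0 < K5 := lt_of_le_of_ne hK5nn (Ne.symm hK5)
      have htnpos : 0 < tn := by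
        rw [htn]
        exact div_pos (mul_pos hK5pos (Real.sqrt_pos.mpr hLpos)) (Real.sqrt_pos.mpr hnpos)
      have htn2 : tn ^ 2 = K5 ^ 2 * L / (n:ℝ) := by
        rw [htn, div_pow, mul_pow, Real.sq_sqrt hLpos.le, Real.sq_sqrt hnpos.le]
      have hBle : B ≤ L := by
        have h1 : Real.exp B ≤ (n:ℝ) := by
          calc Real.exp B ≤ (⌈Real.exp B⌉₊ : ℝ) := Nat.le_ceil _
            _ ≤ (n:ℝ) := by exact_mod_cast le_trans (le_max_right 1 _) hn
        have h2 : Real.log (n:ℝ) ≤ L := by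
          rw [hLdef]
          apply Real.log_le_log hnpos
          rw [le_div_iff₀ hδ0]
          nlinarith
        calc B = Real.log (Real.exp B) := (Real.log_exp B).symm
          _ ≤ Real.log (n:ℝ) := Real.log_le_log (Real.exp_pos _) h1
          _ ≤ L := h2
      have hCle : C ≤ δ / 4 * K5 ^ 2 * L := by
        have hCB : δ / 4 * K5 ^ 2 * B = C := by
          rw [hBdef]
          field_simp
        calc C = δ / 4 * K5 ^ 2 * B := hCB.symm
          _ ≤ δ / 4 * K5 ^ 2 * L :=
            mul_le_mul_of_nonneg_left hBle (by positivity)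
      have hEle : ∫ ω, g ω ∂μn ≤ δ / 4 * tn ^ 2 := by
        rw [hgVal, htn2]
        rw [show δ / 4 * (K5 ^ 2 * L / (n:ℝ)) = (δ / 4 * K5 ^ 2 * L) / (n:ℝ) from by ring,
          show (n:ℝ)⁻¹ * C = C / (n:ℝ) from by ring]
        gcongr
      have hM := mul_meas_ge_le_integral_of_nonneg hg_nonneg hgInt (tn ^ 2)
      have hsub : {ω : (Fin n → Fin d → ℝ) × (Fin n → Fin p → ℝ) | tn < Real.sqrt (f ω)}
          ⊆ {ω | tn ^ 2 ≤ g ω} := by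
        intro ω hω
        simp only [Set.mem_setOf_eq] at hω ⊢
        rw [← hfg ω]
        exact le_of_lt ((Real.lt_sqrt htnn).mp hω)
      refine le_trans (measure_mono hsub) ?_
      rw [ENNReal.le_ofReal_iff_toReal_le (measure_ne_top _ _) (by positivity)]
      have h2 : tn ^ 2 * (μn {ω | tn ^ 2 ≤ g ω}).toReal ≤ δ / 4 * tn ^ 2 :=
        le_trans hM hEle
      nlinarith [ENNReal.toReal_nonneg
        (a := μn {ω : (Fin n → Fin d → ℝ) × (Fin n → Fin p → ℝ) | tn ^ 2 ≤ g ω}),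
        pow_pos htnpos 2]
  have hfinal : ENNReal.ofReal (1 - δ / 4)
      ≤ μn ({ω : (Fin n → Fin d → ℝ) × (Fin n → Fin p → ℝ) | tn < Real.sqrt (f ω)}ᶜ) := by
    rw [measure_compl hS1meas (measure_ne_top _ _), measure_univ]
    have hO : ENNReal.ofReal (1 - δ / 4) = 1 - ENNReal.ofReal (δ / 4) := by
      rw [ENNReal.ofReal_sub 1 (by positivity), ENNReal.ofReal_one]
    rw [hO]
    exact tsub_le_tsub_left hmain 1
  refine le_trans hfinal (measure_mono ?_)
  intro ω hω
  simp only [Set.mem_compl_iff, Set.mem_setOf_eq, not_lt] at hω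
  show opN _ ≤ tn
  calc opN ((n:ℝ)⁻¹ • ∑ i, Matrix.vecMulVec (ω.2 i) (ω.1 i))
      ≤ frob ((n:ℝ)⁻¹ • ∑ i, Matrix.vecMulVec (ω.2 i) (ω.1 i)) := opN_le_frob _
    _ = Real.sqrt (f ω) := hfrob ω
    _ ≤ tn := hω

end
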